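/- Let B be an n×n real matrix such that there is exactly one permutation σ of {1,…,n} with B_{i,σ(i)} ≠ 0 for every i (the bipartite weighted graph with biadjacency matrix B has a unique perfect matching), and let A = [[0, B],[Bᵀ, 0]] be the associated 2n×2n adjacency matrix. Then no vertex is sedentary: for every index u of A, inf_{t>0} |exp(itA)_{u,u}| = 0. -/

import Mathlib

open Matrix
open scoped Kronecker

/-- Transition matrix `U(t) = exp(itA)` of the continuous-time quantum walk on the
weighted graph with real symmetric adjacency matrix `A`. -/
noncomputable def transition {m : Type*} [Fintype m] [DecidableEq m]
    (A : Matrix m m ℝ) (t : ℝ) : Matrix m m ℂ :=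
  NormedSpace.exp ((Complex.I * t) • A.map (fun x : ℝ => (x : ℂ)))

/-- A vertex `u` is sedentary if `inf_{t>0} |U(t)_{u,u}| > 0`. -/
noncomputable def Sedentary {m : Type*} [Fintype m] [DecidableEq m]
    (A : Matrix m m ℝ) (u : m) : Prop :=
  0 < ⨅ t : {t : ℝ // 0 < t}, ‖transition A t u u‖

/-- `E` is the orthogonal spectral projection of `A` for the eigenvalue `θ`:
`E` is real symmetric, idempotent, and for every vector `v`, `A·v = θ·v ↔ E·v = v`. -/
def IsSpectralProj {m : Type*} [Fintype m] [DecidableEq m]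
    (A : Matrix m m ℝ) (θ : ℝ) (E : Matrix m m ℝ) : Prop :=
  E.IsSymm ∧ E * E = E ∧ ∀ v : m → ℝ, A.mulVec v = θ • v ↔ E.mulVec v = v

/-!
A unique perfect matching leaves a single nonzero term in the Leibniz expansion of `det B`, so
`B`, and with it `A`, is invertible. Since `A` is bipartite, conjugating by the signature matrix
`diag(1, -1)` negates `A`; together with `U(t)ᴴ = U(-t)` this makes every diagonal entry
`f(t) = U(t)_{uu}` real. As `A` is invertible, `f` has the antiderivative `(U(t) (iA)⁻¹)_{uu}`,
which is bounded because `U(t)` is unitary. If `|f| ≥ c > 0` on `(0, ∞)`, then `f` has constant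
sign there (Darboux), so its antiderivative grows at least like `c t`: a contradiction.
-/

open NormedSpace

theorem Matrix.det_ne_zero_of_existsUnique_perm {n R : Type*} [Fintype n] [DecidableEq n]
    [CommRing R] [IsDomain R] {B : Matrix n n R}
    (h : ∃! σ : Equiv.Perm n, ∀ i, B i (σ i) ≠ 0) : B.det ≠ 0 := by
  obtain ⟨σ, hσ, huniq⟩ := h
  rw [← det_transpose, det_apply, Finset.sum_eq_single_of_mem σ (Finset.mem_univ σ)]
  · exact (smul_ne_zero_iff_ne _).2 (Finset.prod_ne_zero_iff.2 fun i _ => hσ i)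
  · intro τ _ hτ
    obtain ⟨i, hi⟩ : ∃ i, B i (τ i) = 0 := by
      by_contra! hne
      exact hτ (huniq τ hne)
    rw [Finset.prod_eq_zero (Finset.mem_univ i) hi, smul_zero]

theorem Matrix.isUnit_fromBlocks_zero_zero {n R : Type*} [Fintype n] [DecidableEq n]
    [CommRing R] {B C : Matrix n n R} (hB : IsUnit B) (hC : IsUnit C) :
    IsUnit (fromBlocks 0 B C 0) := by
  refine (isUnit_iff_isUnit_det _).2
    (isUnit_det_of_right_inverse (B := fromBlocks 0 C⁻¹ B⁻¹ 0) ?_)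
  rw [fromBlocks_multiply, mul_nonsing_inv B ((isUnit_iff_isUnit_det B).1 hB),
    mul_nonsing_inv C ((isUnit_iff_isUnit_det C).1 hC)]
  simp

theorem Matrix.norm_mul_apply_le_of_mem_unitaryGroup {m 𝕜 : Type*} [Fintype m] [DecidableEq m]
    [RCLike 𝕜] {U : Matrix m m 𝕜} (hU : U ∈ unitaryGroup m 𝕜) (M : Matrix m m 𝕜) (i j : m) :
    ‖(U * M) i j‖ ≤ ∑ k, ‖M k j‖ := by
  rw [mul_apply]
  refine (norm_sum_le _ _).trans (Finset.sum_le_sum fun k _ => ?_)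
  rw [norm_mul]
  exact mul_le_of_le_one_left (norm_nonneg _) (entry_norm_bound_of_unitary hU i k)

theorem Matrix.diagonal_sumElim_mul_fromBlocks_zero_zero_mul {m n R : Type*} [Fintype m]
    [DecidableEq m] [Fintype n] [DecidableEq n] [Ring R] (B : Matrix m n R)
    (C : Matrix n m R) :
    diagonal (Sum.elim 1 (-1)) * fromBlocks 0 B C 0 * diagonal (Sum.elim 1 (-1)) =
      -fromBlocks 0 B C 0 := by
  ext (i | i) (j | j) <;> simp [diagonal_mul, mul_diagonal]

theorem Real.not_bddAbove_image_Ioi_of_le_hasDerivAt {f F : ℝ → ℝ} {c : ℝ} (hc : 0 < c)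
    (hF : ∀ t > 0, HasDerivAt F (f t) t) (hcf : ∀ t > 0, c ≤ f t) :
    ¬ BddAbove (F '' Set.Ioi 0) := by
  rintro ⟨C, hC⟩
  have hgrowth := (convex_Ioi (0 : ℝ)).mul_sub_le_image_sub_of_le_deriv
    (fun t ht => (hF t ht).continuousAt.continuousWithinAt)
    (fun t ht => (hF t (interior_subset ht)).differentiableAt.differentiableWithinAt)
    (fun t ht => by
      rw [interior_Ioi] at ht
      exact (hF t ht).deriv ▸ hcf t ht)
  set T : ℝ := 1 + (|C - F 1| + 1) / c
  have hT : 1 ≤ T := le_add_of_nonneg_right (by positivity)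
  have hFT : F T ≤ C := hC ⟨T, zero_lt_one.trans_le hT, rfl⟩
  have hcT : c * (T - 1) = |C - F 1| + 1 := by
    rw [add_sub_cancel_left, mul_div_cancel₀ _ hc.ne']
  have := hgrowth 1 (Set.mem_Ioi.2 one_pos) T (zero_lt_one.trans_le hT) hT
  linarith [le_abs_self (C - F 1)]

theorem Real.iInf_abs_eq_zero_of_hasDerivAt {f F : ℝ → ℝ} {C : ℝ}
    (hF : ∀ t > 0, HasDerivAt F (f t) t) (hFC : ∀ t > 0, |F t| ≤ C) :
    ⨅ t : {t : ℝ // 0 < t}, |f t| = 0 := by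
  by_contra hne
  set c := ⨅ t : {t : ℝ // 0 < t}, |f t|
  have hc : 0 < c := (Real.iInf_nonneg fun _ => abs_nonneg _).lt_of_ne' hne
  have hcf : ∀ t > 0, c ≤ |f t| := fun t ht =>
    ciInf_le ⟨0, by rintro _ ⟨s, rfl⟩; exact abs_nonneg _⟩ (⟨t, ht⟩ : {t : ℝ // 0 < t})
  -- Darboux: `f` is a derivative, so it cannot jump over `(-c, c)` on the connected set `(0, ∞)`.
  have hdarboux := (Set.ordConnected_Ioi (a := (0 : ℝ))).image_hasDerivWithinAt
    (fun t ht => (hF t ht).hasDerivWithinAt)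
  have hsign : (∀ t > 0, c ≤ f t) ∨ (∀ t > 0, c ≤ -f t) := by
    by_contra! h
    obtain ⟨⟨a, ha, hfa⟩, ⟨b, hb, hfb⟩⟩ := h
    have hfa' : f a ≤ -c := by cases abs_cases (f a) <;> linarith [hcf a ha]
    have hfb' : c ≤ f b := by cases abs_cases (f b) <;> linarith [hcf b hb]
    obtain ⟨s, hs, hfs⟩ := hdarboux.out ⟨a, ha, rfl⟩ ⟨b, hb, rfl⟩
      (show (0 : ℝ) ∈ Set.Icc (f a) (f b) from ⟨by linarith, by linarith⟩)
    have := hcf s hs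
    rw [hfs, abs_zero] at this
    linarith
  rcases hsign with hpos | hneg
  · exact Real.not_bddAbove_image_Ioi_of_le_hasDerivAt hc hF hpos
      ⟨C, by rintro _ ⟨t, ht, rfl⟩; exact (le_abs_self _).trans (hFC t ht)⟩
  · exact Real.not_bddAbove_image_Ioi_of_le_hasDerivAt hc (fun t ht => (hF t ht).neg) hneg
      ⟨C, by rintro _ ⟨t, ht, rfl⟩; exact (neg_le_abs _).trans (hFC t ht)⟩

section QuantumWalk

variable {m : Type*} [Fintype m] [DecidableEq m] (A : Matrix m m ℝ)

theorem transition_eq_exp (t : ℝ) :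
    transition A t = exp (t • (Complex.I • A.map (fun x : ℝ => (x : ℂ)))) := by
  rw [transition, mul_comm, ← Complex.real_smul, smul_assoc]

theorem transition_zero : transition A 0 = 1 := by
  rw [transition_eq_exp, zero_smul, exp_zero]

theorem transition_add (s t : ℝ) : transition A (s + t) = transition A s * transition A t := by
  simp only [transition_eq_exp, add_smul]
  exact Matrix.exp_add_of_commute _ _ ((Commute.refl _).smul_left s |>.smul_right t)

theorem transition_neg (t : ℝ) : transition (-A) t = transition A (-t) := by
  rw [transition_eq_exp, transition_eq_exp, Matrix.map_neg _ Complex.ofReal_neg, smul_neg,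
    smul_neg, neg_smul]

variable {A}

theorem conjTranspose_transition (hA : A.IsSymm) (t : ℝ) :
    (transition A t)ᴴ = transition A (-t) := by
  rw [transition_eq_exp, transition_eq_exp, ← Matrix.exp_conjTranspose]
  congr 1
  ext i j
  simp [conjTranspose_apply, hA.apply i j]

theorem transition_mem_unitaryGroup (hA : A.IsSymm) (t : ℝ) :
    transition A t ∈ unitaryGroup m ℂ := by
  rw [mem_unitaryGroup_iff, star_eq_conjTranspose, conjTranspose_transition hA,
    ← transition_add, add_neg_cancel, transition_zero]

theorem transition_diagonal_conj (d : m → ℝ) (hd : ∀ i, d i * d i = 1) (t : ℝ) :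
    transition (diagonal d * A * diagonal d) t =
      diagonal (fun i => (d i : ℂ)) * transition A t * diagonal (fun i => (d i : ℂ)) := by
  set D : Matrix m m ℂ := diagonal (fun i => (d i : ℂ))
  have hDD : D * D = 1 := by
    rw [diagonal_mul_diagonal, ← diagonal_one]
    exact congrArg diagonal (funext fun i => by exact_mod_cast hd i)
  have hmap : (diagonal d * A * diagonal d).map (fun x : ℝ => (x : ℂ)) =
      D * A.map (fun x : ℝ => (x : ℂ)) * D := by
    ext i j
    simp [D, diagonal_mul, mul_diagonal]
  rw [transition_eq_exp, transition_eq_exp, hmap]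
  convert Matrix.exp_units_conj ⟨D, D, hDD, hDD⟩ (t • Complex.I • A.map (fun x : ℝ => (x : ℂ)))
    using 2
  · simp only [Matrix.mul_smul, Matrix.smul_mul, Units.val_mk, Units.inv_mk]
  · rfl

theorem im_transition_apply_self_eq_zero (hA : A.IsSymm) (d : m → ℝ) (hd : ∀ i, d i * d i = 1)
    (hanti : diagonal d * A * diagonal d = -A) (u : m) (t : ℝ) :
    (transition A t u u).im = 0 := by
  rw [← Complex.conj_eq_iff_im]
  calc (starRingEnd ℂ) (transition A t u u) = (transition A t)ᴴ u u := rfl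
    _ = transition (diagonal d * A * diagonal d) t u u := by
      rw [conjTranspose_transition hA, ← transition_neg, hanti]
    _ = transition A t u u := by
      rw [transition_diagonal_conj d hd, mul_diagonal, diagonal_mul, mul_right_comm,
        ← Complex.ofReal_mul, hd u, Complex.ofReal_one, one_mul]

theorem im_transition_fromBlocks_apply_self_eq_zero {k l : Type*} [Fintype k] [DecidableEq k]
    [Fintype l] [DecidableEq l] (B : Matrix k l ℝ) (u : k ⊕ l) (t : ℝ) :
    (transition (fromBlocks 0 B Bᵀ 0) t u u).im = 0 := by
  have hsign : ∀ i : k ⊕ l, Sum.elim (1 : k → ℝ) (-1) i * Sum.elim (1 : k → ℝ) (-1) i = 1 := by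
    rintro (i | i) <;> simp
  exact im_transition_apply_self_eq_zero (isSymm_zero.fromBlocks rfl isSymm_zero) _ hsign
    (diagonal_sumElim_mul_fromBlocks_zero_zero_mul B Bᵀ) u t

end QuantumWalk

section LinftyOpNorm

attribute [local instance] Matrix.linftyOpNormedAddCommGroup Matrix.linftyOpNormedRing
  Matrix.linftyOpNormedAlgebra

variable {m : Type*} [Fintype m] [DecidableEq m]

theorem hasDerivAt_transition (A : Matrix m m ℝ) (t : ℝ) :
    HasDerivAt (transition A)
      (transition A t * (Complex.I • A.map (fun x : ℝ => (x : ℂ)))) t := by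
  rw [funext (transition_eq_exp A)]
  exact hasDerivAt_exp_smul_const _ t

theorem iInf_norm_transition_apply_self_eq_zero {A : Matrix m m ℝ} (hA : A.IsSymm)
    (hunit : IsUnit A) (u : m) (hreal : ∀ t, (transition A t u u).im = 0) :
    ⨅ t : {t : ℝ // 0 < t}, ‖transition A t u u‖ = 0 := by
  set iAinv : Matrix m m ℂ := (-Complex.I) • A⁻¹.map (fun x : ℝ => (x : ℂ))
  have hinv : A.map (fun x : ℝ => (x : ℂ)) * A⁻¹.map (fun x : ℝ => (x : ℂ)) = 1 := by
    have := congrArg Complex.ofRealHom.mapMatrix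
      (mul_nonsing_inv A ((isUnit_iff_isUnit_det A).1 hunit))
    rwa [map_mul, map_one] at this
  have hmul_iAinv : (Complex.I • A.map (fun x : ℝ => (x : ℂ))) * iAinv = 1 := by
    rw [Matrix.smul_mul, Matrix.mul_smul, hinv, smul_smul, mul_neg, Complex.I_mul_I, neg_neg,
      one_smul]
  let L : Matrix m m ℂ →L[ℝ] ℝ :=
    Complex.reCLM.comp (entryLinearMap ℝ ℂ u u).toContinuousLinearMap
  have hF : ∀ t > 0, HasDerivAt (fun s => ((transition A s * iAinv) u u).re)
      (transition A t u u).re t := by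
    intro t _
    have hd := (hasDerivAt_transition A t).mul_const iAinv
    rw [mul_assoc, hmul_iAinv, mul_one] at hd
    exact L.hasFDerivAt.comp_hasDerivAt t hd
  have hFC : ∀ t > 0, |((transition A t * iAinv) u u).re| ≤ ∑ k, ‖iAinv k u‖ := fun t _ =>
    (Complex.abs_re_le_norm _).trans
      (norm_mul_apply_le_of_mem_unitaryGroup (transition_mem_unitaryGroup hA t) iAinv u u)
  have hnorm : ∀ t, |(transition A t u u).re| = ‖transition A t u u‖ := fun t =>
    Complex.abs_re_eq_norm.2 (hreal t)
  simpa only [hnorm] using Real.iInf_abs_eq_zero_of_hasDerivAt hF hFC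

end LinftyOpNorm

/-- if the bipartite weighted graph with biadjacency matrix `B` has a unique
perfect matching, then no vertex of the bipartite graph with adjacency matrix
`A = [[0, B],[Bᵀ, 0]]` is sedentary. -/
theorem stmt8 {n : ℕ} (B : Matrix (Fin n) (Fin n) ℝ)
    (huniq : ∃! σ : Equiv.Perm (Fin n), ∀ i : Fin n, B i (σ i) ≠ 0) :
    ∀ u : Fin n ⊕ Fin n,
      (⨅ t : {t : ℝ // 0 < t},
        ‖transition
          (Matrix.fromBlocks (0 : Matrix (Fin n) (Fin n) ℝ) B Bᵀ
            (0 : Matrix (Fin n) (Fin n) ℝ)) t u u‖) = 0 := by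
  intro u
  have hB : IsUnit B :=
    (isUnit_iff_isUnit_det B).2 (det_ne_zero_of_existsUnique_perm huniq).isUnit
  exact iInf_norm_transition_apply_self_eq_zero (isSymm_zero.fromBlocks rfl isSymm_zero)
    (isUnit_fromBlocks_zero_zero hB ((isUnit_transpose B).2 hB)) u
    (im_transition_fromBlocks_apply_self_eq_zero B u)
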